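/- The map sending each symmetry g of the Sierpinski gasket to the induced map g_X on words (defined by g_X(x) = y iff g(K_x) = K_y) is an injective group homomorphism from the symmetry group of K into the automorphism group of the Sierpinski graph (X,E); in particular, x ~ y in (X,E) if and only if g_X(x) ~ g_X(y). -/

import Mathlib

open MeasureTheory Set Filter
noncomputable section

abbrev E (d : ℕ) := EuclideanSpace ℝ (Fin d)

variable {d : ℕ}

/-- The maps of the Sierpinski gasket IFS: `F p i x = (p i + x)/2`. -/
def F (p : Fin (d+1) → E d) (i : Fin (d+1)) (x : E d) : E d := midpoint ℝ (p i) x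

/-- `F_x = F_{i₁} ∘ ⋯ ∘ F_{iₙ}` for a word `x = i₁…iₙ`. -/
def Fword (p : Fin (d+1) → E d) (w : List (Fin (d+1))) : E d → E d :=
  w.foldr (fun i f => F p i ∘ f) id

/-- The cell `K_x = F_x(K)`. -/
def Kcell (p : Fin (d+1) → E d) (K : Set (E d)) (w : List (Fin (d+1))) : Set (E d) :=
  Fword p w '' K

/-- Edges of the augmented rooted tree (Sierpinski graph): vertical edges to the
parent (drop the last letter) and horizontal edges between distinct equal-length
words whose cells intersect. -/
def Edge (p : Fin (d+1) → E d) (K : Set (E d)) (x y : List (Fin (d+1))) : Prop :=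
  (x ≠ [] ∧ y = x.dropLast) ∨ (y ≠ [] ∧ x = y.dropLast) ∨
    (x ≠ y ∧ x.length = y.length ∧ (Kcell p K x ∩ Kcell p K y).Nonempty)

/-- The symmetry group of `K`: isometries of `ℝ^d` mapping `K` onto itself. -/
def symGroup (K : Set (E d)) : Subgroup (E d ≃ᵢ E d) where
  carrier := {g | g '' K = K}
  one_mem' := by simp
  mul_mem' := by
    intro a b ha hb
    simp only [Set.mem_setOf_eq] at *
    have h : ⇑(a * b) = ⇑a ∘ ⇑b := rfl
    rw [h, Set.image_comp, hb, ha]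
  inv_mem' := by
    intro a ha
    simp only [Set.mem_setOf_eq] at *
    conv_lhs => rw [← ha]
    rw [← Set.image_comp]
    simp

/-! The vertices `p i` are the fixed points of the contractions `F p i`, so they lie in `K`, and
`K` lies in their convex hull, a regular simplex of side one. In such a simplex only a vertex can be
at distance one from another point, so every symmetry of `K` permutes the vertices. A symmetry is
affine (Mazur–Ulam), hence conjugates `F p i` to `F p (τ i)` and maps the cell `K_w` onto
`K_{τ w}`; this preserves both kinds of edges. The vertices affinely span the space, so the
permutation `τ` determines the symmetry. -/

open Function Metric

theorem affineIndependent_of_pairwise_dist_eq {ι V P : Type*} [NormedAddCommGroup V]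
    [InnerProductSpace ℝ V] [MetricSpace P] [NormedAddTorsor V P] {p : ι → P} {r : ℝ}
    (hr : r ≠ 0) (hp : Pairwise fun i j => dist (p i) (p j) = r) : AffineIndependent ℝ p := by
  classical
  intro s w hw hv
  have hsq : ∀ i j, dist (p i) (p j) * dist (p i) (p j) = r ^ 2 - if i = j then r ^ 2 else 0 := by
    intro i j
    rcases eq_or_ne i j with rfl | hij
    · simp
    · simp [hp hij, hij, sq]
  -- the Gram identity `‖∑ wᵢ pᵢ‖² = r² ∑ wᵢ² / 2` for weights summing to zero
  have hgram := EuclideanGeometry.inner_weightedVSub p hw p hw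
  simp only [hv, inner_zero_left, hsq, mul_sub, Finset.sum_sub_distrib, mul_ite, mul_zero,
    Finset.sum_ite_eq, ← Finset.sum_mul, ← Finset.mul_sum, hw, Finset.sum_ite_mem,
    Finset.inter_self, zero_mul, Finset.sum_const_zero] at hgram
  have hsum : ∑ i ∈ s, w i ^ 2 = 0 := by
    simp only [sq] at hgram ⊢
    exact (mul_eq_zero.1 (by linarith)).resolve_right (mul_ne_zero hr hr)
  intro i hi
  exact pow_eq_zero_iff two_ne_zero |>.1 <|
    (Finset.sum_eq_zero_iff_of_nonneg fun j _ => sq_nonneg (w j)).1 hsum i hi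

theorem mem_of_mem_convexHull_of_diam_le_dist {V : Type*} [NormedAddCommGroup V]
    [NormedSpace ℝ V] [StrictConvexSpace ℝ V] {s : Set V} (hs : Bornology.IsBounded s)
    {x y : V} (hx : x ∈ convexHull ℝ s) (hy : y ∈ convexHull ℝ s) (hxy : x ≠ y)
    (hdiam : diam s ≤ dist x y) : x ∈ s := by
  have hball : convexHull ℝ s ⊆ closedBall y (dist x y) := fun z hz =>
    calc dist z y ≤ diam (convexHull ℝ s) :=
          dist_le_diam_of_mem (isBounded_convexHull.2 hs) hz hy
      _ = diam s := convexHull_diam s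
      _ ≤ dist x y := hdiam
  -- a point of the bounding sphere is extreme in the ball, hence in the hull
  have hext : x ∈ (closedBall y (dist x y)).extremePoints ℝ :=
    StrictConvexSpace.sphere_subset_extremePoints_closedBall y (dist_ne_zero.2 hxy)
      (mem_sphere.2 rfl)
  exact extremePoints_convexHull_subset
    (inter_extremePoints_subset_extremePoints_of_subset hball ⟨hx, hext⟩)

theorem IsometryEquiv.ext_on {V₁ V₂ P₁ P₂ : Type*} [NormedAddCommGroup V₁] [NormedSpace ℝ V₁]
    [MetricSpace P₁] [NormedAddTorsor V₁ P₁] [NormedAddCommGroup V₂] [NormedSpace ℝ V₂]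
    [MetricSpace P₂] [NormedAddTorsor V₂ P₂] {s : Set P₁} (hs : affineSpan ℝ s = ⊤)
    {f g : P₁ ≃ᵢ P₂} (hfg : s.EqOn f g) : f = g := by
  have h := AffineMap.ext_on (f := f.toRealAffineIsometryEquiv.toAffineEquiv.toAffineMap)
    (g := g.toRealAffineIsometryEquiv.toAffineEquiv.toAffineMap) hs hfg
  exact IsometryEquiv.ext fun x => congrArg (· x) h

theorem mem_of_isFixedPt_of_mapsTo {X : Type*} [MetricSpace X] [CompleteSpace X] {f : X → X}
    {c : NNReal} (hf : ContractingWith c f) {K : Set X} (hK : IsClosed K) (hKne : K.Nonempty)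
    (hfK : MapsTo f K K) {x : X} (hx : IsFixedPt f x) : x ∈ K := by
  obtain ⟨y, hy⟩ := hKne
  have : Nonempty X := ⟨y⟩
  have hlim := hf.tendsto_iterate_fixedPoint y
  rw [← hf.fixedPoint_unique hx] at hlim
  exact hK.mem_of_tendsto hlim (Filter.Eventually.of_forall fun n => hfK.iterate n hy)

theorem subset_of_subset_iUnion_image_of_mapsTo {X ι : Type*} [MetricSpace X] {f : ι → X → X}
    {c : NNReal} (hf : ∀ i, ContractingWith c (f i)) {K H : Set X} (hK : IsCompact K)
    (hKf : K ⊆ ⋃ i, f i '' K) (hH : IsCompact H) (hHne : H.Nonempty)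
    (hfH : ∀ i, MapsTo (f i) H H) : K ⊆ H := by
  rcases K.eq_empty_or_nonempty with rfl | hKne
  · exact empty_subset H
  -- the point `f i y` of `K` farthest from `H` is at most `c` times as far from `H` as `y`
  obtain ⟨x, hxK, hmax⟩ := hK.exists_isMaxOn hKne (continuous_infDist_pt H).continuousOn
  obtain ⟨i, y, hyK, rfl⟩ := mem_iUnion.1 (hKf hxK)
  obtain ⟨z, hzH, hz⟩ := hH.exists_infDist_eq_dist hHne y
  have hcontr : infDist (f i y) H ≤ c * infDist (f i y) H :=
    calc infDist (f i y) H ≤ dist (f i y) (f i z) := infDist_le_dist_of_mem (hfH i hzH)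
      _ ≤ c * dist y z := (hf i).2.dist_le_mul y z
      _ = c * infDist y H := by rw [hz]
      _ ≤ c * infDist (f i y) H := by gcongr; exact hmax hyK
  have hc : (c : ℝ) < 1 := (hf i).1
  have hzero : infDist (f i y) H = 0 := by nlinarith [infDist_nonneg (x := f i y) (s := H)]
  intro w hw
  rw [hH.isClosed.mem_iff_infDist_zero hHne]
  exact le_antisymm (hzero ▸ hmax hw) infDist_nonneg

theorem Subgroup.exists_permHom_of_mapsTo_range {X α : Type*} [PseudoEMetricSpace X]
    (G : Subgroup (X ≃ᵢ X)) {p : α → X} (hp : Injective p)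
    (h : ∀ g : G, MapsTo (g : X ≃ᵢ X) (range p) (range p)) :
    ∃ τ : G →* Equiv.Perm α, ∀ (g : G) i, (g : X ≃ᵢ X) (p i) = p (τ g i) := by
  choose σ hσ using fun (g : G) i => h g (mem_range_self i)
  let σHom : G →* Function.End α :=
    { toFun := σ
      map_one' := funext fun i => hp (hσ 1 i)
      map_mul' := fun g g' => funext fun i => hp <| by
        show p (σ (g * g') i) = p (σ g (σ g' i))
        rw [hσ, hσ, hσ]
        rfl }
  exact ⟨Equiv.Perm.equivUnitsEnd.symm.toMonoidHom.comp σHom.toHomUnits, fun g i => (hσ g i).symm⟩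

def Equiv.Perm.listMapHom (α : Type*) : Equiv.Perm α →* Equiv.Perm (List α) where
  toFun := Equiv.listEquivOfEquiv
  map_one' := Equiv.ext List.map_id
  map_mul' e f := Equiv.ext fun l => (List.map_map (f := f) (g := e) (l := l)).symm

@[simp]
theorem Equiv.Perm.listMapHom_apply {α : Type*} (e : Equiv.Perm α) (l : List α) :
    listMapHom α e l = l.map e :=
  rfl

theorem Equiv.Perm.listMapHom_injective (α : Type*) : Injective (listMapHom α) :=
  fun _ _ h => Equiv.ext fun a => List.singleton_injective (congrArg (· [a]) h)

section Gasket

variable (p : Fin (d+1) → E d) (K : Set (E d))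

theorem contractingWith_F (i : Fin (d+1)) : ContractingWith (1/2) (F p i) := by
  refine ⟨by norm_num, LipschitzWith.of_dist_le_mul fun x y => ?_⟩
  simpa [F, div_eq_inv_mul] using dist_midpoint_midpoint_le (p i) x (p i) y

theorem mapsTo_F_convexHull (i : Fin (d+1)) :
    MapsTo (F p i) (convexHull ℝ (range p)) (convexHull ℝ (range p)) := fun _ hx =>
  (convex_convexHull ℝ _).segment_subset (subset_convexHull ℝ _ (mem_range_self i)) hx
    (midpoint_mem_segment _ _)

theorem Kcell_nil : Kcell p K [] = K := image_id K

theorem Kcell_cons (i : Fin (d+1)) (w : List (Fin (d+1))) :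
    Kcell p K (i :: w) = F p i '' Kcell p K w :=
  image_comp (F p i) (Fword p w) K

variable {p K}

theorem vertex_mem (hKc : IsCompact K) (hKne : K.Nonempty) (hKself : K = ⋃ i, F p i '' K)
    (i : Fin (d+1)) : p i ∈ K := by
  refine mem_of_isFixedPt_of_mapsTo (contractingWith_F p i) hKc.isClosed hKne
    (fun x hx => ?_) (midpoint_self ℝ (p i))
  rw [hKself]
  exact mem_iUnion_of_mem i (mem_image_of_mem _ hx)

theorem subset_convexHull_vertices (hKc : IsCompact K) (hKself : K = ⋃ i, F p i '' K) :
    K ⊆ convexHull ℝ (range p) :=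
  subset_of_subset_iUnion_image_of_mapsTo (contractingWith_F p) hKc hKself.subset
    ((finite_range p).isCompact_convexHull ℝ) ((range_nonempty p).mono (subset_convexHull ℝ _))
    (mapsTo_F_convexHull p)

theorem IsometryEquiv.image_Kcell (g : E d ≃ᵢ E d) (hgK : g '' K = K) {σ : Fin (d+1) → Fin (d+1)}
    (hσ : ∀ i, g (p i) = p (σ i)) (w : List (Fin (d+1))) :
    g '' Kcell p K w = Kcell p K (w.map σ) := by
  induction w with
  | nil => simpa only [List.map_nil, Kcell_nil]
  | cons i w ih =>
    have hcomm : g ∘ F p i = F p (σ i) ∘ g := funext fun x => by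
      simp only [comp_apply, F, g.map_midpoint, hσ]
    rw [List.map_cons, Kcell_cons, Kcell_cons, ← image_comp, hcomm, image_comp, ih]

theorem Edge.map {g : E d ≃ᵢ E d} {σ : Equiv.Perm (Fin (d+1))}
    (hcell : ∀ w, g '' Kcell p K w = Kcell p K (w.map σ)) {x y : List (Fin (d+1))}
    (h : Edge p K x y) : Edge p K (x.map σ) (y.map σ) := by
  rcases h with ⟨hx, rfl⟩ | ⟨hy, rfl⟩ | ⟨hxy, hlen, hne⟩
  · exact Or.inl ⟨by simpa using hx, List.map_dropLast⟩
  · exact Or.inr (Or.inl ⟨by simpa using hy, List.map_dropLast⟩)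
  · refine Or.inr (Or.inr ⟨(List.map_injective_iff.2 σ.injective).ne hxy, by simp [hlen], ?_⟩)
    rw [← hcell, ← hcell, ← image_inter g.injective]
    exact hne.image g

theorem IsometryEquiv.mapsTo_range_of_image_eq (hd : 1 ≤ d)
    (hp : Pairwise fun i j => dist (p i) (p j) = 1) (hpK : ∀ i, p i ∈ K)
    (hKp : K ⊆ convexHull ℝ (range p)) (g : E d ≃ᵢ E d) (hgK : g '' K = K) :
    MapsTo g (range p) (range p) := by
  rintro _ ⟨i, rfl⟩
  have : Nontrivial (Fin (d+1)) := Fin.nontrivial_iff_two_le.2 (by omega)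
  obtain ⟨j, hji⟩ := exists_ne i
  have hmem : ∀ k, g (p k) ∈ convexHull ℝ (range p) := fun k =>
    hKp (hgK ▸ mem_image_of_mem g (hpK k))
  have hdist : dist (g (p i)) (g (p j)) = 1 := by rw [g.dist_eq, hp hji.symm]
  have hdiam : diam (range p) ≤ 1 := by
    refine diam_le_of_forall_dist_le zero_le_one ?_
    rintro _ ⟨a, rfl⟩ _ ⟨b, rfl⟩
    rcases eq_or_ne a b with rfl | hab
    · simp
    · exact (hp hab).le
  exact mem_of_mem_convexHull_of_diam_le_dist (finite_range p).isBounded (hmem i) (hmem j)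
    (dist_ne_zero.1 (by rw [hdist]; exact one_ne_zero)) (hdist ▸ hdiam)

end Gasket

/-- The map sending a symmetry of the gasket to the induced map on words is an
injective homomorphism into the automorphism group of the Sierpinski graph:
it preserves the edge relation in both directions. -/
theorem stmt5 (hd : 1 ≤ d) (p : Fin (d+1) → E d)
    (hp : ∀ i j, i ≠ j → dist (p i) (p j) = 1)
    (K : Set (E d)) (hKc : IsCompact K) (hKne : K.Nonempty)
    (hKself : K = ⋃ i, F p i '' K) :
    ∃ Φ : symGroup K →* Equiv.Perm (List (Fin (d+1))),
      Function.Injective Φ ∧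
      (∀ g : symGroup K, ∀ w, (g : E d ≃ᵢ E d) '' Kcell p K w = Kcell p K (Φ g w)) ∧
      (∀ g : symGroup K, ∀ x y, Edge p K x y ↔ Edge p K (Φ g x) (Φ g y)) := by
  have hind : AffineIndependent ℝ p := affineIndependent_of_pairwise_dist_eq one_ne_zero hp
  have hspan : affineSpan ℝ (range p) = ⊤ :=
    hind.affineSpan_eq_top_iff_card_eq_finrank_add_one.2 (by simp)
  obtain ⟨τ, hτ⟩ := (symGroup K).exists_permHom_of_mapsTo_range hind.injective fun g =>
    IsometryEquiv.mapsTo_range_of_image_eq hd hp (vertex_mem hKc hKne hKself)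
      (subset_convexHull_vertices hKc hKself) g g.2
  have hcell (g : symGroup K) := IsometryEquiv.image_Kcell _ g.2 (hτ g)
  refine ⟨(Equiv.Perm.listMapHom _).comp τ,
    (Equiv.Perm.listMapHom_injective _).comp fun g g' hgg' => ?_, hcell,
    fun g x y => ⟨Edge.map (hcell g), fun h => ?_⟩⟩
  · refine Subtype.ext (IsometryEquiv.ext_on hspan ?_)
    rintro _ ⟨i, rfl⟩
    rw [hτ, hτ, hgg']
  · simpa [List.map_map] using Edge.map (hcell g⁻¹) h
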